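/- arXiv:2510.06082 — 2 statements merged into one kernel-verified Lean document; each statement's English description precedes it below -/
import Mathlib

section
/- Let q be a prime power and let V be a 2ν-dimensional vector space over 𝔽_q equipped with a non-degenerate alternating bilinear form. For 0 ≤ k ≤ ν, the number of k-dimensional totally isotropic subspaces of V equals ∏_{i=0}^{k−1} (q^{2(ν−i)} − 1)/(q^{i+1} − 1). -/
/-!
Count the linearly independent `k`-tuples spanning a totally isotropic subspace in two ways.
Built one vector at a time, the next vector ranges over `⟨v₁, …, vⱼ⟩ᗮ \ ⟨v₁, …, vⱼ⟩`, which by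
non-degeneracy has `q ^ (2ν - j) - q ^ j` elements. On the other hand, every `k`-dimensional totally
isotropic subspace has exactly `∏_{j<k} (q ^ k - q ^ j)` ordered bases. Dividing, the powers `q ^ j`
cancel and what is left is the stated product.
-/

open Module Submodule Finset
open LinearMap (BilinForm)
open LinearMap.BilinForm

theorem Nat.card_eq_mul_of_forall_card_fiber {α β : Type*} [Finite α] [Finite β] (f : α → β)
    {n : ℕ} (h : ∀ b, Nat.card {a // f a = b} = n) : Nat.card α = Nat.card β * n := by
  have := Fintype.ofFinite β
  rw [← Nat.card_congr (Equiv.sigmaFiberEquiv f), Nat.card_sigma,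
    Finset.sum_congr rfl fun b _ => h b, sum_const, Finset.card_univ, smul_eq_mul,
    Nat.card_eq_fintype_card]

theorem Nat.cast_prod_range_pow_sub_pow {R : Type*} [CommRing R] {q k : ℕ} (hq : 0 < q)
    {f : ℕ → ℕ} (hf : ∀ i < k, i ≤ f i) :
    ((∏ i ∈ range k, (q ^ f i - q ^ i) : ℕ) : R) =
      (∏ i ∈ range k, (q : R) ^ i) * ∏ i ∈ range k, ((q : R) ^ (f i - i) - 1) := by
  rw [Nat.cast_prod, ← prod_mul_distrib]
  refine prod_congr rfl fun i hi => ?_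
  have hi := hf i (mem_range.1 hi)
  rw [Nat.cast_sub (Nat.pow_le_pow_right hq hi), mul_sub, ← pow_add, Nat.add_sub_cancel' hi]
  push_cast
  ring

theorem cast_eq_prod_div_of_mul_prod_eq {q ν k N : ℕ} (hq : 1 < q) (hk : k ≤ ν)
    (h : N * ∏ i ∈ range k, (q ^ k - q ^ i) = ∏ i ∈ range k, (q ^ (2 * ν - i) - q ^ i)) :
    (N : ℚ) = ∏ i ∈ range k, ((q : ℚ) ^ (2 * (ν - i)) - 1) / ((q : ℚ) ^ (i + 1) - 1) := by
  have hq' : (1 : ℚ) < q := by exact_mod_cast hq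
  have hpow : ∏ i ∈ range k, (q : ℚ) ^ i ≠ 0 :=
    prod_ne_zero_iff.2 fun i _ => pow_ne_zero _ (by positivity)
  have hden : ∏ i ∈ range k, ((q : ℚ) ^ (i + 1) - 1) ≠ 0 :=
    prod_ne_zero_iff.2 fun i _ => sub_ne_zero.2 (one_lt_pow₀ hq' i.succ_ne_zero).ne'
  have hreflect :
      ∏ i ∈ range k, ((q : ℚ) ^ (k - i) - 1) = ∏ i ∈ range k, ((q : ℚ) ^ (i + 1) - 1) := by
    rw [← prod_range_reflect]
    refine prod_congr rfl fun i hi => ?_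
    rw [show k - (k - 1 - i) = i + 1 by have := mem_range.1 hi; omega]
  have hnum : ∏ i ∈ range k, ((q : ℚ) ^ (2 * ν - i - i) - 1) =
      ∏ i ∈ range k, ((q : ℚ) ^ (2 * (ν - i)) - 1) :=
    prod_congr rfl fun i _ => by rw [show 2 * ν - i - i = 2 * (ν - i) by omega]
  have hcast := congrArg (Nat.cast : ℕ → ℚ) h
  rw [Nat.cast_mul, Nat.cast_prod_range_pow_sub_pow (by omega) fun i hi => hi.le,
    Nat.cast_prod_range_pow_sub_pow (by omega) fun i hi => by omega, hreflect, hnum] at hcast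
  rw [prod_div_distrib, eq_div_iff hden]
  exact mul_left_cancel₀ hpow (by linear_combination hcast)

section Orthogonal

variable {F V : Type*} [Field F] [AddCommGroup V] [Module F V] (B : BilinForm F V)

theorem LinearMap.BilinForm.mem_orthogonal_span_range_iff {ι : Type*} (s : ι → V) (x : V) :
    x ∈ B.orthogonal (span F (Set.range s)) ↔ ∀ i, B (s i) x = 0 := by
  refine ⟨fun h i => h (s i) (subset_span (Set.mem_range_self i)), fun h y hy => ?_⟩
  have hle : span F (Set.range s) ≤ LinearMap.ker (B.flip x) :=
    span_le.2 <| Set.range_subset_iff.2 fun i => by simpa using h i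
  simpa using hle hy

theorem LinearMap.BilinForm.span_range_le_orthogonal_iff {ι : Type*} (s : ι → V) :
    span F (Set.range s) ≤ B.orthogonal (span F (Set.range s)) ↔ ∀ i j, B (s i) (s j) = 0 := by
  simp only [span_le, Set.range_subset_iff, SetLike.mem_coe, mem_orthogonal_span_range_iff]
  exact forall_comm

theorem Submodule.ncard_sdiff_of_le [Fintype F] [Finite V] {W U : Submodule F V} (h : W ≤ U) :
    ((U : Set V) \ W).ncard = Fintype.card F ^ finrank F U - Fintype.card F ^ finrank F W := by
  rw [Set.ncard_sdiff h, ← Nat.card_coe_set_eq, ← Nat.card_coe_set_eq, SetLike.coe_sort_coe,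
    SetLike.coe_sort_coe, natCard_eq_pow_finrank (K := F) (V := U),
    natCard_eq_pow_finrank (K := F) (V := W), Nat.card_eq_fintype_card]

end Orthogonal

section Frames

variable {F V : Type*} [Field F] [AddCommGroup V] [Module F V] (B : BilinForm F V)

abbrev IsotropicFrame (k : ℕ) :=
  {s : Fin k → V // LinearIndependent F s ∧ ∀ i j, B (s i) (s j) = 0}

abbrev IsotropicSubspace (k : ℕ) :=
  {W : Submodule F V // finrank F W = k ∧ ∀ w ∈ W, ∀ w' ∈ W, B w w' = 0}

variable {B} {k : ℕ}

namespace IsotropicFrame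

def tail (t : IsotropicFrame B (k + 1)) : IsotropicFrame B k :=
  ⟨Fin.tail t.1, (linearIndependent_finSucc.1 t.2.1).1, fun i j => t.2.2 i.succ j.succ⟩

def cons (hB : B.IsAlt) (s : IsotropicFrame B k) (v : V)
    (hv : v ∈ ((B.orthogonal (span F (Set.range s.1)) : Set V) \ span F (Set.range s.1))) :
    IsotropicFrame B (k + 1) :=
  ⟨Fin.cons v s.1, linearIndependent_finCons.2 ⟨s.2.1, hv.2⟩, by
    have hvs := (mem_orthogonal_span_range_iff B s.1 v).1 hv.1
    refine Fin.cases (Fin.cases (hB v) fun j => ?_) fun i => Fin.cases (hvs i) (s.2.2 i)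
    show B v (s.1 j) = 0
    rw [← hB.neg_eq, hvs j, neg_zero]⟩

def tailFiberEquiv (hB : B.IsAlt) (s : IsotropicFrame B k) :
    {t : IsotropicFrame B (k + 1) // t.tail = s} ≃
      ↥((B.orthogonal (span F (Set.range s.1)) : Set V) \ span F (Set.range s.1)) where
  toFun t := ⟨t.1.1 0, by
    obtain ⟨t, rfl⟩ := t
    refine ⟨(mem_orthogonal_span_range_iff B _ _).2 fun i => t.2.2 i.succ 0, ?_⟩
    exact (linearIndependent_finSucc.1 t.2.1).2⟩
  invFun v := ⟨cons hB s v.1 v.2, Subtype.ext rfl⟩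
  left_inv := by
    rintro ⟨t, rfl⟩
    exact Subtype.ext (Subtype.ext (Fin.cons_self_tail t.1))
  right_inv _ := Subtype.ext rfl

def toSubspace (t : IsotropicFrame B k) : IsotropicSubspace B k :=
  ⟨span F (Set.range t.1), by rw [finrank_span_eq_card t.2.1, Fintype.card_fin],
    fun w hw w' hw' => (span_range_le_orthogonal_iff B t.1).2 t.2.2 hw' w hw⟩

variable [FiniteDimensional F V]

def toSubspaceFiberEquiv (W : IsotropicSubspace B k) :
    {t : IsotropicFrame B k // t.toSubspace = W} ≃ {u : Fin k → W.1 // LinearIndependent F u} where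
  toFun t :=
    ⟨fun i => ⟨t.1.1 i, (congrArg Subtype.val t.2).le (subset_span (Set.mem_range_self i))⟩,
      LinearIndependent.of_comp W.1.subtype t.1.2.1⟩
  invFun u := by
    have hli : LinearIndependent F fun i => (u.1 i : V) := u.2.map' W.1.subtype W.1.ker_subtype
    refine ⟨⟨fun i => u.1 i, hli, fun i j => W.2.2 _ (u.1 i).2 _ (u.1 j).2⟩, Subtype.ext ?_⟩
    change span F (Set.range fun i => (u.1 i : V)) = W.1
    refine eq_of_le_of_finrank_le (span_le.2 <| Set.range_subset_iff.2 fun i => (u.1 i).2) ?_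
    rw [finrank_span_eq_card hli, Fintype.card_fin, W.2.1]
  left_inv _ := rfl
  right_inv _ := rfl

end IsotropicFrame

section Count

variable [Fintype F] [Finite V]

theorem card_tail_fiber (hB : B.IsAlt) (hnd : B.Nondegenerate) (s : IsotropicFrame B k) :
    Nat.card {t : IsotropicFrame B (k + 1) // t.tail = s} =
      Fintype.card F ^ (finrank F V - k) - Fintype.card F ^ k := by
  rw [Nat.card_congr (IsotropicFrame.tailFiberEquiv hB s), Nat.card_coe_set_eq,
    ncard_sdiff_of_le ((span_range_le_orthogonal_iff B s.1).2 s.2.2), finrank_orthogonal hnd,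
    finrank_span_eq_card s.2.1, Fintype.card_fin]

theorem card_isotropicFrame (hB : B.IsAlt) (hnd : B.Nondegenerate) (k : ℕ) :
    Nat.card (IsotropicFrame B k) =
      ∏ i ∈ range k, (Fintype.card F ^ (finrank F V - i) - Fintype.card F ^ i) := by
  induction k with
  | zero =>
    have : Unique (IsotropicFrame B 0) :=
      ⟨⟨⟨Fin.elim0, linearIndependent_empty_type, fun i => i.elim0⟩⟩,
        fun _ => Subtype.ext (Subsingleton.elim _ _)⟩
    rw [Nat.card_unique, prod_range_zero]
  | succ k ih =>
    rw [Nat.card_eq_mul_of_forall_card_fiber IsotropicFrame.tail (card_tail_fiber hB hnd), ih,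
      prod_range_succ]

theorem card_isotropicSubspace_mul (k : ℕ) :
    Nat.card (IsotropicSubspace B k) * ∏ i ∈ range k, (Fintype.card F ^ k - Fintype.card F ^ i) =
      Nat.card (IsotropicFrame B k) := by
  refine (Nat.card_eq_mul_of_forall_card_fiber IsotropicFrame.toSubspace fun W => ?_).symm
  rw [Nat.card_congr (IsotropicFrame.toSubspaceFiberEquiv W), card_linearIndependent W.2.1.ge,
    W.2.1, Fin.prod_univ_eq_prod_range (fun i => Fintype.card F ^ k - Fintype.card F ^ i)]

end Count

end Frames

theorem stmt_10_general (q : ℕ)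
    (F : Type*) [Field F] [Fintype F] (hF : Fintype.card F = q)
    (V : Type*) [AddCommGroup V] [Module F V] [FiniteDimensional F V]
    (ν : ℕ) (hdim : Module.finrank F V = 2 * ν)
    (B : V →ₗ[F] V →ₗ[F] F)
    (halt : ∀ v, B v v = 0)
    (hnd : ∀ v, (∀ w, B v w = 0) → v = 0)
    (k : ℕ) (hk : k ≤ ν) :
    (Nat.card {W : Submodule F V //
        Module.finrank F W = k ∧ ∀ w ∈ W, ∀ w' ∈ W, B w w' = 0} : ℚ) =
      ∏ i ∈ Finset.range k, ((q : ℚ) ^ (2 * (ν - i)) - 1) / ((q : ℚ) ^ (i + 1) - 1) := by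
  have : Finite V := Module.finite_of_finite F
  have hBalt : B.IsAlt := halt
  have hBnd : B.Nondegenerate := hBalt.isRefl.nondegenerate_iff_separatingLeft.2 hnd
  have hcount := card_isotropicSubspace_mul (B := B) k
  rw [card_isotropicFrame hBalt hBnd, hdim, hF] at hcount
  exact cast_eq_prod_div_of_mul_prod_eq (hF ▸ Fintype.one_lt_card) hk hcount

/-- In a `2ν`-dimensional non-degenerate symplectic space over `𝔽_q`, the number of
`k`-dimensional totally isotropic subspaces equals
`∏_{i=0}^{k−1} (q^{2(ν−i)} − 1)/(q^{i+1} − 1)`. -/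
theorem stmt_10 (q : ℕ) (hq : ∃ p k : ℕ, p.Prime ∧ 0 < k ∧ q = p ^ k)
    (F : Type*) [Field F] [Fintype F] (hF : Fintype.card F = q)
    (V : Type*) [AddCommGroup V] [Module F V] [FiniteDimensional F V]
    (ν : ℕ) (hdim : Module.finrank F V = 2 * ν)
    (B : V →ₗ[F] V →ₗ[F] F)
    (halt : ∀ v, B v v = 0)
    (hnd : ∀ v, (∀ w, B v w = 0) → v = 0)
    (k : ℕ) (hk : k ≤ ν) :
    (Nat.card {W : Submodule F V //
        Module.finrank F W = k ∧ ∀ w ∈ W, ∀ w' ∈ W, B w w' = 0} : ℚ) =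
      ∏ i ∈ Finset.range k, ((q : ℚ) ^ (2 * (ν - i)) - 1) / ((q : ℚ) ^ (i + 1) - 1) :=
  stmt_10_general q F hF V ν hdim B halt hnd k hk
end

section
/- The number of self-dual binary linear codes of even length n (with respect to the standard dot product on 𝔽₂^n) equals ∏_{i=1}^{n/2 − 1} (2^i + 1). -/
/-!
Let `B` be a nondegenerate reflexive form on a space of dimension `2 (r + m)` over a field with
`q` elements, and `U₀` a totally isotropic subspace of dimension `r` such that every vector of
`U₀ᗮ` is isotropic. Double count the pairs `(C, x)` with `C = Cᗮ ⊇ U₀` and `x ∈ C \ U₀`: each `C`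
contributes `q ^ (r + m) - q ^ r` vectors, while each `x ∈ U₀ᗮ \ U₀` lies in exactly the
Lagrangians containing the totally isotropic space `U₀ + ⟨x⟩`, of which there are
`∏_{i=1}^{m-1} (q ^ i + 1)` by induction on `m`. As `q ^ (r + 2m) - q ^ r` is
`(q ^ (r + m) - q ^ r) (q ^ m + 1)`, the Lagrangians containing `U₀` number `∏_{i=1}^m (q ^ i + 1)`.

For the dot product on `𝔽₂ⁿ` we have `v ⬝ᵥ v = v ⬝ᵥ 1`, so every self-dual code contains the
all-ones vector `1`, and every vector of `1ᗮ` is isotropic. For `n` even, `U₀ = ⟨1⟩` is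
isotropic, and `r = 1`, `m = n / 2 - 1` (or `r = m = 0` when `n = 0`).
-/

open Module Finset
open LinearMap (BilinForm)

theorem Nat.pow_add_two_mul_sub_pow {q : ℕ} (hq : 0 < q) (a b : ℕ) :
    q ^ (a + 2 * b) - q ^ a = (q ^ (a + b) - q ^ a) * (q ^ b + 1) := by
  have hab : q ^ a ≤ q ^ (a + b) := Nat.pow_le_pow_right hq (Nat.le_add_right a b)
  have ha2b : q ^ a ≤ q ^ (a + 2 * b) := Nat.pow_le_pow_right hq (Nat.le_add_right a _)
  zify [hab, ha2b]
  ring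

theorem Nat.card_subtype_eq_card_filter {α : Type*} [Fintype α] (p : α → Prop)
    [DecidablePred p] : Nat.card {x // p x} = #{x | p x} := by
  rw [Nat.card_eq_fintype_card, Fintype.card_subtype]

theorem Submodule.natCard_sdiff_of_le {K V : Type*} [DivisionRing K] [AddCommGroup V]
    [Module K V] [Module.Finite K V] [Finite K] {U W : Submodule K V} (h : U ≤ W) :
    Nat.card ↥((W : Set V) \ U) = Nat.card K ^ finrank K W - Nat.card K ^ finrank K U := by
  have : Finite V := Module.finite_of_finite K
  rw [Nat.card_coe_set_eq, Set.ncard_sdiff h, ← Nat.card_coe_set_eq, ← Nat.card_coe_set_eq,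
    SetLike.coe_sort_coe, SetLike.coe_sort_coe, natCard_eq_pow_finrank (K := K) (V := W),
    natCard_eq_pow_finrank (K := K) (V := U)]

namespace LinearMap.BilinForm

variable {K V : Type*} [Field K] [AddCommGroup V] [Module K V] {B : BilinForm K V}

def lagrangiansAbove (B : BilinForm K V) (U₀ : Submodule K V) : Set (Submodule K V) :=
  {C | C = B.orthogonal C ∧ U₀ ≤ C}

theorem sup_span_singleton_le_orthogonal (hB : B.IsRefl) {U : Submodule K V}
    (hU : U ≤ B.orthogonal U) {x : V} (hx : x ∈ B.orthogonal U) (hxx : B x x = 0) :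
    U ⊔ K ∙ x ≤ B.orthogonal (U ⊔ K ∙ x) := by
  intro y hy z hz
  obtain ⟨u, hu, _, hax, rfl⟩ := Submodule.mem_sup.1 hy
  obtain ⟨w, hw, _, hbx, rfl⟩ := Submodule.mem_sup.1 hz
  obtain ⟨a, rfl⟩ := Submodule.mem_span_singleton.1 hax
  obtain ⟨b, rfl⟩ := Submodule.mem_span_singleton.1 hbx
  have hwu : B w u = 0 := hU hu w hw
  have hwx : B w x = 0 := hx w hw
  have hxu : B x u = 0 := hB _ _ (hx u hu)
  simp [hwu, hwx, hxu, hxx]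

variable [FiniteDimensional K V]

theorem two_mul_finrank_eq_of_eq_orthogonal (hB : B.Nondegenerate) {C : Submodule K V}
    (hC : C = B.orthogonal C) : 2 * finrank K C = finrank K V := by
  have h := finrank_orthogonal hB C
  rw [← hC] at h
  have := Submodule.finrank_le C
  omega

theorem eq_orthogonal_of_le_of_two_mul_finrank (hB : B.Nondegenerate) {U : Submodule K V}
    (hU : U ≤ B.orthogonal U) (hd : 2 * finrank K U = finrank K V) : U = B.orthogonal U :=
  Submodule.eq_of_le_of_finrank_le hU (by rw [finrank_orthogonal hB]; omega)

variable [Finite K]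

theorem natCard_lagrangiansAbove_mul_eq (hB : B.Nondegenerate) {U₀ : Submodule K V}
    (hU₀ : U₀ ≤ B.orthogonal U₀) {m N : ℕ}
    (hd : finrank K V = 2 * (finrank K U₀ + (m + 1)))
    (hN : ∀ x ∈ B.orthogonal U₀, x ∉ U₀ → Nat.card (B.lagrangiansAbove (U₀ ⊔ K ∙ x)) = N) :
    Nat.card (B.lagrangiansAbove U₀) *
        (Nat.card K ^ (finrank K U₀ + (m + 1)) - Nat.card K ^ finrank K U₀) =
      (Nat.card K ^ (finrank K U₀ + 2 * (m + 1)) - Nat.card K ^ finrank K U₀) * N := by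
  classical
  have : Finite V := Module.finite_of_finite K
  have : Finite (Submodule K V) := Finite.of_injective _ SetLike.coe_injective
  have := Fintype.ofFinite V
  have := Fintype.ofFinite (Submodule K V)
  have key := Finset.card_mul_eq_card_mul (fun C x => x ∈ C)
    (s := {C | C ∈ B.lagrangiansAbove U₀}) (t := {x | x ∈ (B.orthogonal U₀ : Set V) \ U₀})
    (m := Nat.card K ^ (finrank K U₀ + (m + 1)) - Nat.card K ^ finrank K U₀) (n := N) ?_ ?_
  · have hd' : finrank K (B.orthogonal U₀) = finrank K U₀ + 2 * (m + 1) := by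
      rw [finrank_orthogonal hB]; omega
    rwa [← hd', ← Submodule.natCard_sdiff_of_le hU₀, Nat.card_subtype_eq_card_filter,
      Nat.card_subtype_eq_card_filter]
  · rintro C hC
    obtain ⟨hCC, hU₀C⟩ := (Finset.mem_filter.1 hC).2
    have hCU₀ : C ≤ B.orthogonal U₀ := hCC.trans_le (orthogonal_le hU₀C)
    have hrC : finrank K C = finrank K U₀ + (m + 1) := by
      have := two_mul_finrank_eq_of_eq_orthogonal hB hCC; omega
    rw [← hrC, ← Submodule.natCard_sdiff_of_le hU₀C, Nat.card_subtype_eq_card_filter,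
      Finset.bipartiteAbove, Finset.filter_filter]
    congr 1; ext x
    simp only [Finset.mem_filter, Finset.mem_univ, true_and, Set.mem_sdiff, SetLike.mem_coe]
    exact ⟨fun ⟨⟨_, hxU₀⟩, hxC⟩ => ⟨hxC, hxU₀⟩, fun ⟨hxC, hxU₀⟩ => ⟨⟨hCU₀ hxC, hxU₀⟩, hxC⟩⟩
  · rintro x hx
    obtain ⟨hxU₀, hxnU₀⟩ := (Finset.mem_filter.1 hx).2
    rw [← hN x hxU₀ hxnU₀, Nat.card_subtype_eq_card_filter,
      Finset.bipartiteBelow, Finset.filter_filter]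
    congr 1; ext C
    simp [lagrangiansAbove, sup_le_iff, Submodule.span_singleton_le_iff_mem, and_assoc]

theorem natCard_lagrangiansAbove (hB : B.Nondegenerate) (hB' : B.IsRefl) {U₀ : Submodule K V}
    (hU₀ : U₀ ≤ B.orthogonal U₀) (hiso : ∀ x ∈ B.orthogonal U₀, B x x = 0) {m : ℕ}
    (hd : finrank K V = 2 * (finrank K U₀ + m)) :
    Nat.card (B.lagrangiansAbove U₀) = ∏ i ∈ Icc 1 m, (Nat.card K ^ i + 1) := by
  induction m generalizing U₀ with
  | zero =>
    have hself : U₀ = B.orthogonal U₀ := eq_orthogonal_of_le_of_two_mul_finrank hB hU₀ (by omega)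
    rw [Finset.Icc_eq_empty (by omega), Finset.prod_empty, Nat.card_eq_one_iff_exists]
    refine ⟨⟨U₀, hself, le_rfl⟩, fun ⟨C, hCC, hU₀C⟩ => Subtype.ext (le_antisymm ?_ hU₀C)⟩
    exact hCC.trans_le ((orthogonal_le hU₀C).trans hself.ge)
  | succ m ih =>
    have hq : 1 < Nat.card K := Finite.one_lt_card
    have hstep := natCard_lagrangiansAbove_mul_eq hB hU₀ hd fun x hx hxU₀ =>
      ih (sup_span_singleton_le_orthogonal hB' hU₀ hx (hiso x hx))
        (fun y hy => hiso y (orthogonal_le le_sup_left hy))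
        (by rw [Submodule.finrank_sup_span_singleton hxU₀]; omega)
    have hpos : 0 < Nat.card K ^ (finrank K U₀ + (m + 1)) - Nat.card K ^ finrank K U₀ :=
      Nat.sub_pos_of_lt (Nat.pow_lt_pow_right hq (by omega))
    rw [Nat.pow_add_two_mul_sub_pow (by omega), mul_comm, mul_assoc] at hstep
    rw [Finset.prod_Icc_succ_top (by omega), mul_comm]
    exact Nat.eq_of_mul_eq_mul_left hpos hstep

end LinearMap.BilinForm

section DotProduct

variable {ι : Type*} [Fintype ι]

theorem isRefl_dotProductBilin {R : Type*} [CommSemiring R] :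
    BilinForm.IsRefl (dotProductBilin R R : BilinForm R (ι → R)) :=
  fun v w h => by simpa [dotProduct_comm] using h

theorem nondegenerate_dotProductBilin {R : Type*} [CommSemiring R] :
    BilinForm.Nondegenerate (dotProductBilin R R : BilinForm R (ι → R)) :=
  ⟨fun v hv => dotProduct_eq_zero v hv,
    fun w hw => dotProduct_eq_zero w fun v => (dotProduct_comm w v).trans (hw v)⟩

theorem ZMod.dotProduct_self_eq_dotProduct_one (v : ι → ZMod 2) : v ⬝ᵥ v = v ⬝ᵥ 1 := by
  have hidem : ∀ a : ZMod 2, a * a = a := by decide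
  simp only [dotProduct, hidem, Pi.one_apply, mul_one]

theorem ZMod.one_mem_of_eq_orthogonal {C : Submodule (ZMod 2) (ι → ZMod 2)}
    (hC : C = BilinForm.orthogonal (dotProductBilin (ZMod 2) (ZMod 2)) C) : 1 ∈ C := by
  rw [hC]
  intro v hv
  have hvv : v ⬝ᵥ v = 0 := (hC ▸ hv : v ∈ BilinForm.orthogonal _ C) v hv
  simpa [← ZMod.dotProduct_self_eq_dotProduct_one] using hvv

theorem ZMod.span_one_le_orthogonal (hι : Even (Fintype.card ι)) :
    (ZMod 2 ∙ (1 : ι → ZMod 2)) ≤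
      BilinForm.orthogonal (dotProductBilin (ZMod 2) (ZMod 2)) (ZMod 2 ∙ (1 : ι → ZMod 2)) := by
  refine (Submodule.span_singleton_le_iff_mem _ _).2 fun v hv => ?_
  obtain ⟨c, rfl⟩ := Submodule.mem_span_singleton.1 hv
  simp [one_dotProduct_one, (ZMod.natCast_eq_zero_iff_even).2 hι]

theorem ZMod.dotProduct_self_eq_zero_of_mem_orthogonal {v : ι → ZMod 2}
    (hv : v ∈ BilinForm.orthogonal (dotProductBilin (ZMod 2) (ZMod 2)) (ZMod 2 ∙ 1)) :
    v ⬝ᵥ v = 0 := by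
  rw [ZMod.dotProduct_self_eq_dotProduct_one, dotProduct_comm]
  exact hv 1 (Submodule.mem_span_singleton_self 1)

end DotProduct

/-- The number of self-dual binary linear codes of even length `n` equals
`∏_{i=1}^{n/2−1} (2^i + 1)`. -/
theorem stmt_12 (n : ℕ) (hn : Even n) :
    Nat.card {C : Submodule (ZMod 2) (Fin n → ZMod 2) //
        (C : Set (Fin n → ZMod 2)) = {y | ∀ x ∈ C, ∑ i, x i * y i = 0}} =
      ∏ i ∈ Finset.Icc 1 (n / 2 - 1), (2 ^ i + 1) := by
  set B : BilinForm (ZMod 2) (Fin n → ZMod 2) := dotProductBilin (ZMod 2) (ZMod 2)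
  set U₀ := ZMod 2 ∙ (1 : Fin n → ZMod 2)
  have hd : finrank (ZMod 2) (Fin n → ZMod 2) = 2 * (finrank (ZMod 2) U₀ + (n / 2 - 1)) := by
    rcases n.eq_zero_or_pos with rfl | hpos
    · simp [Subsingleton.elim U₀ ⊥]
    · have : Nonempty (Fin n) := ⟨⟨0, hpos⟩⟩
      rw [finrank_span_singleton one_ne_zero, finrank_fin_fun]
      obtain ⟨k, rfl⟩ := hn
      omega
  have hselfDual (C : Submodule (ZMod 2) (Fin n → ZMod 2)) :
      (C : Set (Fin n → ZMod 2)) = {y | ∀ x ∈ C, ∑ i, x i * y i = 0} ↔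
        C ∈ B.lagrangiansAbove U₀ :=
    ⟨fun h => ⟨SetLike.coe_injective h, (Submodule.span_singleton_le_iff_mem _ _).2
      (ZMod.one_mem_of_eq_orthogonal (SetLike.coe_injective h))⟩, fun h => congrArg _ h.1⟩
  rw [Nat.card_congr (Equiv.subtypeEquivRight hselfDual),
    BilinForm.natCard_lagrangiansAbove nondegenerate_dotProductBilin isRefl_dotProductBilin
      (ZMod.span_one_le_orthogonal (by simpa using hn))
      (fun x hx => ZMod.dotProduct_self_eq_zero_of_mem_orthogonal hx) hd, Nat.card_zmod]
end
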